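/- Let A be an algebra over Ω and M ⊆ ba(A) be dominated by λ ∈ ba(A)₊. If λ dominates M, then the component λᶜ of λ in the Lebesgue-type decomposition λ = λᶜ + λ⊥ (with λᶜ ∈ L(M) and λ⊥ singular to A(M)) also dominates M: every μ ∈ M is absolutely continuous with respect to λᶜ. -/

import Mathlib

open Set Filter Topology

variable {Ω : Type*}

/-- `𝒜` is an algebra of subsets of `Ω`. -/
def IsAlg (𝒜 : Set (Set Ω)) : Prop :=
  ∅ ∈ 𝒜 ∧ Set.univ ∈ 𝒜 ∧ (∀ A ∈ 𝒜, Aᶜ ∈ 𝒜) ∧ ∀ A ∈ 𝒜, ∀ B ∈ 𝒜, A ∪ B ∈ 𝒜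

/-- bounded finitely additive set function (element of ba(𝒜)). -/
def IsFinAdd (𝒜 : Set (Set Ω)) (μ : Set Ω → ℝ) : Prop :=
  μ ∅ = 0 ∧
  (∀ A ∈ 𝒜, ∀ B ∈ 𝒜, Disjoint A B → μ (A ∪ B) = μ A + μ B) ∧
  ∃ C : ℝ, ∀ A ∈ 𝒜, |μ A| ≤ C

def IsPos (𝒜 : Set (Set Ω)) (μ : Set Ω → ℝ) : Prop := ∀ A ∈ 𝒜, 0 ≤ μ A

def IsCtblAdd (𝒜 : Set (Set Ω)) (μ : Set Ω → ℝ) : Prop :=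
  ∀ A : ℕ → Set Ω, (∀ n, A n ∈ 𝒜) → Pairwise (Function.onFun Disjoint A) →
    (⋃ n, A n) ∈ 𝒜 → HasSum (fun n => μ (A n)) (μ (⋃ n, A n))

/-- total variation of `μ` on `A`. -/
noncomputable def tv (𝒜 : Set (Set Ω)) (μ : Set Ω → ℝ) (A : Set Ω) : ℝ :=
  sSup {x | ∃ B ∈ 𝒜, B ⊆ A ∧ x = μ B - μ (A \ B)}

noncomputable def tvNorm (𝒜 : Set (Set Ω)) (μ : Set Ω → ℝ) : ℝ := tv 𝒜 μ Set.univ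

/-- `ν ≪ μ`, absolute continuity in the ε-δ sense. -/
def AC (𝒜 : Set (Set Ω)) (ν μ : Set Ω → ℝ) : Prop :=
  ∀ ε > (0:ℝ), ∃ δ > (0:ℝ), ∀ E ∈ 𝒜, tv 𝒜 μ E < δ → tv 𝒜 ν E < ε

/-- `μ ⊥ ν`, singularity in the ε sense. -/
def Sing (𝒜 : Set (Set Ω)) (μ ν : Set Ω → ℝ) : Prop :=
  ∀ ε > (0:ℝ), ∃ B ∈ 𝒜, tv 𝒜 μ Bᶜ + tv 𝒜 ν B < ε

/-- normalized total variation `|μ|/(1 ∨ ‖μ‖)`. -/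
noncomputable def nvar (𝒜 : Set (Set Ω)) (μ : Set Ω → ℝ) (A : Set Ω) : ℝ :=
  tv 𝒜 μ A / (1 ⊔ tvNorm 𝒜 μ)

/-- membership in `𝐀(M)`: countable convex combinations of normalized variations. -/
def MemAM (𝒜 : Set (Set Ω)) (M : Set (Set Ω → ℝ)) (m : Set Ω → ℝ) : Prop :=
  ∃ (μ : ℕ → Set Ω → ℝ) (α : ℕ → ℝ),
    (∀ n, μ n ∈ M) ∧ (∀ n, 0 ≤ α n) ∧ HasSum α 1 ∧
    ∀ A : Set Ω, m A = ∑' n, α n * nvar 𝒜 (μ n) A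

/-- membership in `𝐋(M)`. -/
def MemLM (𝒜 : Set (Set Ω)) (M : Set (Set Ω → ℝ)) (ν : Set Ω → ℝ) : Prop :=
  ∃ m, MemAM 𝒜 M m ∧ AC 𝒜 ν m

/-- order on ba(𝒜). -/
def baLE (𝒜 : Set (Set Ω)) (μ ν : Set Ω → ℝ) : Prop := ∀ A ∈ 𝒜, μ A ≤ ν A

/-- λ-completion of 𝒜. -/
def Completion (𝒜 : Set (Set Ω)) (l : Set Ω → ℝ) : Set (Set Ω) :=
  {B | ∀ ε > (0:ℝ), ∃ A ∈ 𝒜, ∃ A' ∈ 𝒜, A ⊆ B ∧ B ⊆ A' ∧ l (A' \ A) < ε}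

/-- the extension `λ̄` to the completion. -/
noncomputable def extOf (𝒜 : Set (Set Ω)) (l : Set Ω → ℝ) (B : Set Ω) : ℝ :=
  sSup {x | ∃ A ∈ 𝒜, A ⊆ B ∧ x = l A}

/-- λ-atom. -/
def IsLAtom (𝒜 : Set (Set Ω)) (l : Set Ω → ℝ) (B : Set Ω) : Prop :=
  B ∈ 𝒜 ∧ 0 < l B ∧ ∀ A ∈ 𝒜, A ⊆ B → l A = 0 ∨ l (B \ A) = 0

/-- simple 𝒜-measurable function. -/
def IsSimple (𝒜 : Set (Set Ω)) (f : Ω → ℝ) : Prop :=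
  (Set.range f).Finite ∧ ∀ c : ℝ, f ⁻¹' {c} ∈ 𝒜

/-- integral of a simple function. -/
noncomputable def simpleInt (μ : Set Ω → ℝ) (f : Ω → ℝ) : ℝ :=
  ∑ᶠ c : ℝ, c * μ (f ⁻¹' {c})

/-- outer measure associated with l on 𝒜. -/
noncomputable def outerOf (𝒜 : Set (Set Ω)) (l : Set Ω → ℝ) (S : Set Ω) : ℝ :=
  sInf {x | ∃ A ∈ 𝒜, S ⊆ A ∧ x = l A}

/-- Dunford–Schwartz approximating sequence for `f`. -/
def ApproxSeq (𝒜 : Set (Set Ω)) (l : Set Ω → ℝ) (f : Ω → ℝ) (g : ℕ → Ω → ℝ) : Prop :=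
  (∀ n, IsSimple 𝒜 (g n)) ∧
  (∀ ε > (0:ℝ), ∃ N, ∀ p ≥ N, ∀ q ≥ N, simpleInt l (fun x => |g p x - g q x|) < ε) ∧
  (∀ ε > (0:ℝ), Tendsto (fun n => outerOf 𝒜 l {x | ε ≤ |g n x - f x|}) atTop (nhds 0))

/-- membership in L¹(l). -/
def MemL1 (𝒜 : Set (Set Ω)) (l : Set Ω → ℝ) (f : Ω → ℝ) : Prop :=
  ∃ g, ApproxSeq 𝒜 l f g

/-- the Dunford–Schwartz integral. -/
noncomputable def dsInt (𝒜 : Set (Set Ω)) (l : Set Ω → ℝ) (f : Ω → ℝ) : ℝ :=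
  sInf {I | ∃ g, ApproxSeq 𝒜 l f g ∧ Tendsto (fun n => simpleInt l (g n)) atTop (nhds I)}

/-- L¹ seminorm distance. -/
noncomputable def l1dist (𝒜 : Set (Set Ω)) (l : Set Ω → ℝ) (f h : Ω → ℝ) : ℝ :=
  dsInt 𝒜 l (fun x => |f x - h x|)

/-- membership in the L¹(l)-closure of a set C of functions. -/
def InL1Closure (𝒜 : Set (Set Ω)) (l : Set Ω → ℝ) (C : Set (Ω → ℝ)) (f : Ω → ℝ) : Prop :=
  ∀ ε > (0:ℝ), ∃ h ∈ C, l1dist 𝒜 l f h < ε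

/-- the set C = K − Sim(𝒜)₊. -/
def ConeDiff (𝒜 : Set (Set Ω)) (K : Set (Ω → ℝ)) : Set (Ω → ℝ) :=
  {f | ∃ k ∈ K, ∃ s : Ω → ℝ, IsSimple 𝒜 s ∧ (∀ x, 0 ≤ s x) ∧ f = k - s}

/-!
Since `nvar μ ∈ A(M)` is singular to `λ⊥`, for every `η > 0` there is `B ∈ 𝒜` with
`|λ⊥|(Bᶜ) < η` and `|μ|(B) < η`. Given `E` with `|λᶜ|(E)` small, split it along `B`:
`|μ|(E ∩ B) ≤ |μ|(B)` is small, and `|λ|(E ∩ Bᶜ) ≤ |λᶜ|(E) + |λ⊥|(Bᶜ)` is small, hence so is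
`|μ|(E ∩ Bᶜ)` because `μ ≪ λ`.
-/

namespace IsAlg

variable {𝒜 : Set (Set Ω)}

lemma compl_mem (hA : IsAlg 𝒜) {A : Set Ω} (h : A ∈ 𝒜) : Aᶜ ∈ 𝒜 := hA.2.2.1 A h

lemma union_mem (hA : IsAlg 𝒜) {A B : Set Ω} (hA' : A ∈ 𝒜) (hB : B ∈ 𝒜) : A ∪ B ∈ 𝒜 :=
  hA.2.2.2 A hA' B hB

lemma diff_mem (hA : IsAlg 𝒜) {A B : Set Ω} (hA' : A ∈ 𝒜) (hB : B ∈ 𝒜) : A \ B ∈ 𝒜 := by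
  simpa [Set.sdiff_eq, Set.compl_union] using
    hA.compl_mem (hA.union_mem (hA.compl_mem hA') hB)

lemma inter_mem (hA : IsAlg 𝒜) {A B : Set Ω} (hA' : A ∈ 𝒜) (hB : B ∈ 𝒜) : A ∩ B ∈ 𝒜 := by
  simpa using hA.diff_mem hA' (hA.compl_mem hB)

end IsAlg

section TotalVariation

variable {𝒜 : Set (Set Ω)} {f g h : Set Ω → ℝ} {E F B : Set Ω}

lemma IsFinAdd.union_eq (hf : IsFinAdd 𝒜 f) {A B : Set Ω} (hA : A ∈ 𝒜) (hB : B ∈ 𝒜)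
    (hAB : Disjoint A B) : f (A ∪ B) = f A + f B :=
  hf.2.1 A hA B hB hAB

lemma tv_bddAbove (hA : IsAlg 𝒜) {C : ℝ} (hC : ∀ A ∈ 𝒜, |f A| ≤ C) (hE : E ∈ 𝒜) :
    BddAbove {x | ∃ B ∈ 𝒜, B ⊆ E ∧ x = f B - f (E \ B)} := by
  refine ⟨2 * C, ?_⟩
  rintro _ ⟨B, hB, -, rfl⟩
  have h₁ := hC B hB
  have h₂ := hC (E \ B) (hA.diff_mem hE hB)
  linarith [le_abs_self (f B), neg_abs_le (f (E \ B))]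

lemma le_tv (hA : IsAlg 𝒜) {C : ℝ} (hC : ∀ A ∈ 𝒜, |f A| ≤ C) (hE : E ∈ 𝒜) (hB : B ∈ 𝒜)
    (hBE : B ⊆ E) : f B - f (E \ B) ≤ tv 𝒜 f E :=
  le_csSup (tv_bddAbove hA hC hE) ⟨B, hB, hBE, rfl⟩

lemma self_le_tv (hA : IsAlg 𝒜) (hf₀ : f ∅ = 0) {C : ℝ} (hC : ∀ A ∈ 𝒜, |f A| ≤ C)
    (hE : E ∈ 𝒜) : f E ≤ tv 𝒜 f E := by
  simpa [hf₀] using le_tv hA hC hE hE subset_rfl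

lemma tv_nonneg (hA : IsAlg 𝒜) (hf : IsFinAdd 𝒜 f) (hE : E ∈ 𝒜) : 0 ≤ tv 𝒜 f E := by
  obtain ⟨C, hC⟩ := hf.2.2
  have h₁ : f E ≤ tv 𝒜 f E := self_le_tv hA hf.1 hC hE
  have h₂ : -f E ≤ tv 𝒜 f E := by
    simpa [hf.1] using le_tv hA hC hE hA.1 (Set.empty_subset E)
  linarith

lemma tv_empty (hA : IsAlg 𝒜) (hf : IsFinAdd 𝒜 f) : tv 𝒜 f ∅ = 0 := by
  have : {x | ∃ B ∈ 𝒜, B ⊆ (∅ : Set Ω) ∧ x = f B - f (∅ \ B)} = {0} := by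
    ext x
    simp only [Set.subset_empty_iff, Set.mem_ofPred_eq, Set.mem_singleton_iff]
    constructor
    · rintro ⟨B, -, rfl, rfl⟩
      simp [hf.1]
    · rintro rfl
      exact ⟨∅, hA.1, rfl, by simp [hf.1]⟩
  rw [tv, this, csSup_singleton]

/-- Adjoining `F \ E` to `B` when `f (F \ E) ≥ 0`, and to the complement of `B` otherwise, turns
a competitor for `tv f E` into a larger one for `tv f F`. -/
lemma tv_mono (hA : IsAlg 𝒜) (hf : IsFinAdd 𝒜 f) (hE : E ∈ 𝒜) (hF : F ∈ 𝒜) (hEF : E ⊆ F) :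
    tv 𝒜 f E ≤ tv 𝒜 f F := by
  obtain ⟨C, hC⟩ := hf.2.2
  refine Real.sSup_le ?_ (tv_nonneg hA hf hF)
  rintro _ ⟨B, hB, hBE, rfl⟩
  have hFE : F \ E ∈ 𝒜 := hA.diff_mem hF hE
  rcases le_or_gt 0 (f (F \ E)) with hpos | hneg
  · have hkey := le_tv hA hC hF (hA.union_mem hB hFE)
      (Set.union_subset (hBE.trans hEF) Set.sdiff_subset)
    have hset : F \ (B ∪ (F \ E)) = E \ B := by
      ext x; simp only [Set.mem_sdiff, Set.mem_union]; have := @hEF x; tauto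
    rw [hf.union_eq hB hFE (Set.disjoint_left.mpr fun _ hx hx' => hx'.2 (hBE hx)), hset] at hkey
    linarith
  · have hkey := le_tv hA hC hF hB (hBE.trans hEF)
    have hset : F \ B = (E \ B) ∪ (F \ E) := by
      ext x; simp only [Set.mem_sdiff, Set.mem_union]; have := @hEF x; have := @hBE x; tauto
    rw [hset, hf.union_eq (hA.diff_mem hE hB) hFE
      (Set.disjoint_left.mpr fun _ hx hx' => hx'.2 hx.1)] at hkey
    linarith

lemma tv_union_le (hA : IsAlg 𝒜) (hf : IsFinAdd 𝒜 f) (hE : E ∈ 𝒜) (hF : F ∈ 𝒜)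
    (hEF : Disjoint E F) : tv 𝒜 f (E ∪ F) ≤ tv 𝒜 f E + tv 𝒜 f F := by
  obtain ⟨C, hC⟩ := hf.2.2
  refine Real.sSup_le ?_ (add_nonneg (tv_nonneg hA hf hE) (tv_nonneg hA hf hF))
  rintro _ ⟨B, hB, hBEF, rfl⟩
  have hBE := le_tv hA hC hE (hA.inter_mem hB hE) Set.inter_subset_right
  have hBF := le_tv hA hC hF (hA.inter_mem hB hF) Set.inter_subset_right
  have hsplitB : B = (B ∩ E) ∪ (B ∩ F) := by
    rw [← Set.inter_union_distrib_left, Set.inter_eq_left.mpr hBEF]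
  rw [show E \ (B ∩ E) = E \ B by ext; simp] at hBE
  rw [show F \ (B ∩ F) = F \ B by ext; simp] at hBF
  nth_rewrite 1 [hsplitB]
  rw [Set.union_sdiff_distrib, hf.union_eq (hA.diff_mem hE hB) (hA.diff_mem hF hB)
    (hEF.mono Set.sdiff_subset Set.sdiff_subset), hf.union_eq (hA.inter_mem hB hE)
    (hA.inter_mem hB hF) (hEF.mono Set.inter_subset_right Set.inter_subset_right)]
  linarith

lemma tv_le_add (hA : IsAlg 𝒜) (hg : IsFinAdd 𝒜 g) (hh : IsFinAdd 𝒜 h)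
    (hfgh : ∀ A ∈ 𝒜, f A = g A + h A) (hE : E ∈ 𝒜) :
    tv 𝒜 f E ≤ tv 𝒜 g E + tv 𝒜 h E := by
  obtain ⟨Cg, hCg⟩ := hg.2.2
  obtain ⟨Ch, hCh⟩ := hh.2.2
  refine Real.sSup_le ?_ (add_nonneg (tv_nonneg hA hg hE) (tv_nonneg hA hh hE))
  rintro _ ⟨B, hB, hBE, rfl⟩
  rw [hfgh B hB, hfgh (E \ B) (hA.diff_mem hE hB)]
  linarith [le_tv hA hCg hE hB hBE, le_tv hA hCh hE hB hBE]

end TotalVariation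

section NormalizedVariation

variable {𝒜 : Set (Set Ω)} {μ : Set Ω → ℝ}

lemma one_sup_tvNorm_pos (𝒜 : Set (Set Ω)) (μ : Set Ω → ℝ) : 0 < 1 ⊔ tvNorm 𝒜 μ :=
  lt_sup_of_lt_left one_pos

lemma tv_eq_mul_nvar (μ : Set Ω → ℝ) (E : Set Ω) :
    tv 𝒜 μ E = (1 ⊔ tvNorm 𝒜 μ) * nvar 𝒜 μ E := by
  rw [nvar, mul_div_cancel₀ _ (one_sup_tvNorm_pos 𝒜 μ).ne']

lemma nvar_empty (hA : IsAlg 𝒜) (hμ : IsFinAdd 𝒜 μ) : nvar 𝒜 μ ∅ = 0 := by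
  rw [nvar, tv_empty hA hμ, zero_div]

lemma nvar_nonneg (hA : IsAlg 𝒜) (hμ : IsFinAdd 𝒜 μ) {E : Set Ω} (hE : E ∈ 𝒜) :
    0 ≤ nvar 𝒜 μ E :=
  div_nonneg (tv_nonneg hA hμ hE) (one_sup_tvNorm_pos 𝒜 μ).le

lemma abs_nvar_le_one (hA : IsAlg 𝒜) (hμ : IsFinAdd 𝒜 μ) {E : Set Ω} (hE : E ∈ 𝒜) :
    |nvar 𝒜 μ E| ≤ 1 := by
  have hle : tv 𝒜 μ E ≤ 1 ⊔ tvNorm 𝒜 μ :=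
    (tv_mono hA hμ hE hA.2.1 (Set.subset_univ E)).trans le_sup_right
  rw [abs_of_nonneg (nvar_nonneg hA hμ hE)]
  exact div_le_one_of_le₀ hle (one_sup_tvNorm_pos 𝒜 μ).le

lemma nvar_le_tv_nvar (hA : IsAlg 𝒜) (hμ : IsFinAdd 𝒜 μ) {E : Set Ω} (hE : E ∈ 𝒜) :
    nvar 𝒜 μ E ≤ tv 𝒜 (nvar 𝒜 μ) E :=
  self_le_tv hA (nvar_empty hA hμ) (fun _ => abs_nvar_le_one hA hμ) hE

lemma tv_le_mul_tv_nvar (hA : IsAlg 𝒜) (hμ : IsFinAdd 𝒜 μ) {E : Set Ω} (hE : E ∈ 𝒜) :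
    tv 𝒜 μ E ≤ (1 ⊔ tvNorm 𝒜 μ) * tv 𝒜 (nvar 𝒜 μ) E := by
  rw [tv_eq_mul_nvar]
  exact mul_le_mul_of_nonneg_left (nvar_le_tv_nvar hA hμ hE) (one_sup_tvNorm_pos 𝒜 μ).le

lemma memAM_nvar {M : Set (Set Ω → ℝ)} (hμM : μ ∈ M) : MemAM 𝒜 M (nvar 𝒜 μ) := by
  refine ⟨fun _ => μ, Pi.single 0 1, fun _ => hμM,
    fun n => by rcases eq_or_ne n 0 with rfl | hn <;> simp [*], hasSum_pi_single 0 1, fun A => ?_⟩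
  rw [tsum_eq_single 0 fun n hn => by simp [hn]]
  simp

lemma exists_tv_compl_lt_and_tv_lt (hA : IsAlg 𝒜) (hμ : IsFinAdd 𝒜 μ) {lp : Set Ω → ℝ}
    (hp : IsFinAdd 𝒜 lp) (hsing : Sing 𝒜 lp (nvar 𝒜 μ)) {η : ℝ} (hη : 0 < η) :
    ∃ B ∈ 𝒜, tv 𝒜 lp Bᶜ < η ∧ tv 𝒜 μ B < η := by
  set c := 1 ⊔ tvNorm 𝒜 μ
  obtain ⟨B, hB, hsmall⟩ := hsing (η / c) (div_pos hη (one_sup_tvNorm_pos 𝒜 μ))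
  have hlp : 0 ≤ tv 𝒜 lp Bᶜ := tv_nonneg hA hp (hA.compl_mem hB)
  have hnv : 0 ≤ tv 𝒜 (nvar 𝒜 μ) B := (nvar_nonneg hA hμ hB).trans (nvar_le_tv_nvar hA hμ hB)
  refine ⟨B, hB, ?_, ?_⟩
  · calc tv 𝒜 lp Bᶜ < η / c := by linarith
      _ ≤ η := div_le_self hη.le le_sup_left
  · calc tv 𝒜 μ B ≤ c * tv 𝒜 (nvar 𝒜 μ) B := tv_le_mul_tv_nvar hA hμ hB
      _ < c * (η / c) := by gcongr; linarith
      _ = η := mul_div_cancel₀ η (one_sup_tvNorm_pos 𝒜 μ).ne'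

end NormalizedVariation

lemma AC.of_add_of_concentrated {𝒜 : Set (Set Ω)} (hA : IsAlg 𝒜) {μ l lc lp : Set Ω → ℝ}
    (hμ : IsFinAdd 𝒜 μ) (hc : IsFinAdd 𝒜 lc) (hp : IsFinAdd 𝒜 lp)
    (hdec : ∀ A ∈ 𝒜, l A = lc A + lp A) (hdom : AC 𝒜 μ l)
    (hconc : ∀ η > (0 : ℝ), ∃ B ∈ 𝒜, tv 𝒜 lp Bᶜ < η ∧ tv 𝒜 μ B < η) :
    AC 𝒜 μ lc := by
  intro ε hε
  obtain ⟨δ, hδ, hδl⟩ := hdom (ε / 2) (half_pos hε)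
  obtain ⟨B, hB, hlpB, hμB⟩ := hconc (min (δ / 2) (ε / 2)) (lt_min (half_pos hδ) (half_pos hε))
  refine ⟨δ / 2, half_pos hδ, fun E hE hlcE => ?_⟩
  have hEB : E ∩ B ∈ 𝒜 := hA.inter_mem hE hB
  have hEBc : E ∩ Bᶜ ∈ 𝒜 := hA.inter_mem hE (hA.compl_mem hB)
  have hin : tv 𝒜 μ (E ∩ B) < ε / 2 :=
    (tv_mono hA hμ hEB hB Set.inter_subset_right).trans_lt (hμB.trans_le (min_le_right _ _))
  have hout : tv 𝒜 μ (E ∩ Bᶜ) < ε / 2 := by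
    refine hδl _ hEBc ?_
    calc tv 𝒜 l (E ∩ Bᶜ) ≤ tv 𝒜 lc (E ∩ Bᶜ) + tv 𝒜 lp (E ∩ Bᶜ) := tv_le_add hA hc hp hdec hEBc
      _ ≤ tv 𝒜 lc E + tv 𝒜 lp Bᶜ := add_le_add
          (tv_mono hA hc hEBc hE Set.inter_subset_left)
          (tv_mono hA hp hEBc (hA.compl_mem hB) Set.inter_subset_right)
      _ < δ := by linarith [min_le_left (δ / 2) (ε / 2)]
  calc tv 𝒜 μ E = tv 𝒜 μ ((E ∩ B) ∪ (E ∩ Bᶜ)) := by rw [Set.inter_union_compl]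
    _ ≤ tv 𝒜 μ (E ∩ B) + tv 𝒜 μ (E ∩ Bᶜ) := tv_union_le hA hμ hEB hEBc
        (disjoint_compl_right.mono Set.inter_subset_right Set.inter_subset_right)
    _ < ε := by linarith

theorem dominating_part_general {Ω : Type*} (𝒜 : Set (Set Ω)) (hA : IsAlg 𝒜)
    (l lc lp : Set Ω → ℝ)
    (M : Set (Set Ω → ℝ)) (hM : ∀ μ ∈ M, IsFinAdd 𝒜 μ)
    (hc : IsFinAdd 𝒜 lc) (hp : IsFinAdd 𝒜 lp)
    (hdec : ∀ A ∈ 𝒜, l A = lc A + lp A)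
    (hsing : ∀ m, MemAM 𝒜 M m → Sing 𝒜 lp m)
    (hdom : ∀ μ ∈ M, AC 𝒜 μ l) :
    ∀ μ ∈ M, AC 𝒜 μ lc := fun μ hμM =>
  AC.of_add_of_concentrated hA (hM μ hμM) hc hp hdec (hdom μ hμM) fun _ hη =>
    exists_tv_compl_lt_and_tv_lt hA (hM μ hμM) hp (hsing _ (memAM_nvar hμM)) hη

/-- if λ dominates M then the component λᶜ of the Lebesgue-type
decomposition also dominates M. -/
theorem dominating_part {Ω : Type*} (𝒜 : Set (Set Ω)) (hA : IsAlg 𝒜)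
    (l lc lp : Set Ω → ℝ) (hl : IsFinAdd 𝒜 l) (hlpos : IsPos 𝒜 l)
    (M : Set (Set Ω → ℝ)) (hM : ∀ μ ∈ M, IsFinAdd 𝒜 μ)
    (hc : IsFinAdd 𝒜 lc) (hp : IsFinAdd 𝒜 lp)
    (hdec : ∀ A ∈ 𝒜, l A = lc A + lp A)
    (hcL : MemLM 𝒜 M lc) (hsing : ∀ m, MemAM 𝒜 M m → Sing 𝒜 lp m)
    (hdom : ∀ μ ∈ M, AC 𝒜 μ l) :
    ∀ μ ∈ M, AC 𝒜 μ lc :=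
  dominating_part_general 𝒜 hA l lc lp M hM hc hp hdec hsing hdom
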